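/- The category of abelian group objects in the category of small groupoids is equivalent to the category of chain complexes of abelian groups concentrated in degrees 0 and 1. The equivalence sends an abelian group object G in groupoids to its Moore chain complex ker(δ₁) → G₀ given by δ₀. -/

import Mathlib

open CategoryTheory

/-- An *abelian group object in the category of small groupoids*, presented as a
groupoid (objects `C₀`, morphisms `C₁`, source `src = δ₀`, target `tgt = δ₁`,
identities `e`, composition `comp`, inverses `inv`) together with abelian group
structures on `C₀` and `C₁` for which all structure maps are additive
(equivalently, addition is a functor). -/
structure AbGpdObj : Type 1 where
  C₀ : Type
  C₁ : Type
  [grp₀ : AddCommGroup C₀]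
  [grp₁ : AddCommGroup C₁]
  src : C₁ →+ C₀
  tgt : C₁ →+ C₀
  e : C₀ →+ C₁
  comp : C₁ → C₁ → C₁
  inv : C₁ → C₁
  src_e : ∀ x, src (e x) = x
  tgt_e : ∀ x, tgt (e x) = x
  src_comp : ∀ f g, src f = tgt g → src (comp f g) = src g
  tgt_comp : ∀ f g, src f = tgt g → tgt (comp f g) = tgt f
  comp_assoc : ∀ f g h, src f = tgt g → src g = tgt h →
    comp (comp f g) h = comp f (comp g h)
  comp_e : ∀ f, comp f (e (src f)) = f
  e_comp : ∀ f, comp (e (tgt f)) f = f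
  src_inv : ∀ f, src (inv f) = tgt f
  tgt_inv : ∀ f, tgt (inv f) = src f
  comp_inv : ∀ f, comp f (inv f) = e (tgt f)
  inv_comp : ∀ f, comp (inv f) f = e (src f)
  comp_add : ∀ f g f' g', src f = tgt g → src f' = tgt g' →
    comp (f + f') (g + g') = comp f g + comp f' g'

attribute [instance] AbGpdObj.grp₀ AbGpdObj.grp₁

/-- Morphisms of abelian group objects in groupoids: additive functors. -/
@[ext] structure AbGpdHom (G H : AbGpdObj) where
  f₀ : G.C₀ →+ H.C₀
  f₁ : G.C₁ →+ H.C₁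
  comm_src : ∀ a, H.src (f₁ a) = f₀ (G.src a)
  comm_tgt : ∀ a, H.tgt (f₁ a) = f₀ (G.tgt a)
  comm_e : ∀ x, f₁ (G.e x) = H.e (f₀ x)
  comm_comp : ∀ f g, G.src f = G.tgt g → f₁ (G.comp f g) = H.comp (f₁ f) (f₁ g)

instance : Category AbGpdObj where
  Hom := AbGpdHom
  id G := ⟨AddMonoidHom.id _, AddMonoidHom.id _, fun _ => rfl, fun _ => rfl,
    fun _ => rfl, fun _ _ _ => rfl⟩
  comp {G H K} φ ψ := ⟨ψ.f₀.comp φ.f₀, ψ.f₁.comp φ.f₁,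
    fun a => by simp [ψ.comm_src, φ.comm_src],
    fun a => by simp [ψ.comm_tgt, φ.comm_tgt],
    fun x => by simp [φ.comm_e, ψ.comm_e],
    fun f g h => by
      simp only [AddMonoidHom.coe_comp, Function.comp_apply]
      rw [φ.comm_comp f g h, ψ.comm_comp]
      rw [φ.comm_src, φ.comm_tgt, h]⟩
  id_comp φ := rfl
  comp_id φ := rfl
  assoc φ ψ χ := rfl

/-- A *1-truncated chain complex of abelian groups*: a homomorphism
`∂ : F₁ → F₀` of abelian groups (a chain complex concentrated in
degrees 0 and 1). -/
structure Ch01 : Type 1 where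
  F₀ : Type
  F₁ : Type
  [g₀ : AddCommGroup F₀]
  [g₁ : AddCommGroup F₁]
  d : F₁ →+ F₀

attribute [instance] Ch01.g₀ Ch01.g₁

/-- Morphisms of 1-truncated chain complexes: chain maps. -/
@[ext] structure Ch01Hom (C D : Ch01) where
  f₀ : C.F₀ →+ D.F₀
  f₁ : C.F₁ →+ D.F₁
  comm : ∀ a, D.d (f₁ a) = f₀ (C.d a)

instance : Category Ch01 where
  Hom := Ch01Hom
  id C := ⟨AddMonoidHom.id _, AddMonoidHom.id _, fun _ => rfl⟩
  comp φ ψ := ⟨ψ.f₀.comp φ.f₀, ψ.f₁.comp φ.f₁,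
    fun a => by simp [ψ.comm, φ.comm]⟩
  id_comp φ := rfl
  comp_id φ := rfl
  assoc φ ψ χ := rfl

/-- The *Moore complex* functor, sending an abelian group object `G` in
groupoids to the 1-truncated chain complex `ker δ₁ → G₀` given by `δ₀`. -/
def Moore : AbGpdObj ⥤ Ch01 where
  obj G :=
    { F₀ := G.C₀
      F₁ := ↥G.tgt.ker
      d := G.src.comp G.tgt.ker.subtype }
  map {G H} φ :=
    { f₀ := φ.f₀
      f₁ := AddMonoidHom.codRestrict (φ.f₁.comp G.tgt.ker.subtype) H.tgt.ker
        (fun a => by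
          have ha : G.tgt (a : G.C₁) = 0 := a.2
          simp [AddMonoidHom.mem_ker, φ.comm_tgt, ha])
      comm := fun a => by
        exact φ.comm_src (a : G.C₁) }
  map_id G := by
    apply Ch01Hom.ext
    · rfl
    · apply AddMonoidHom.ext; intro a; apply Subtype.ext; rfl
  map_comp φ ψ := by
    apply Ch01Hom.ext
    · rfl
    · apply AddMonoidHom.ext; intro a; apply Subtype.ext; rfl

/-
Eckmann–Hilton: in an abelian group object in groupoids, additivity of composition forces
`f ∘ g = f + g - e (δ₀ f)`, so the groupoid structure is determined by the group structure
together with `δ₀`, `δ₁` and `e`. Moreover `f ↦ (f - e (δ₁ f), δ₁ f)` splits `G₁` as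
`ker δ₁ × G₀`. Hence an additive functor is determined by its components on `G₀` and on
`ker δ₁`, every chain map of Moore complexes lifts to an additive functor, and a complex
`∂ : F₁ → F₀` is the Moore complex of the groupoid on `F₁ × F₀` with `δ₁ (a, x) = x`,
`δ₀ (a, x) = x + ∂ a` and `(a, x) ∘ (b, y) = (a + b, x)`.
-/

namespace AbGpdObj

variable (G : AbGpdObj)

theorem comp_eq (f g : G.C₁) (h : G.src f = G.tgt g) :
    G.comp f g = f + g - G.e (G.src f) := by
  have htgt : G.tgt (g - G.e (G.src f)) = 0 := by simp [h, G.tgt_e]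
  have hzero : G.comp 0 (g - G.e (G.src f)) = g - G.e (G.src f) := by
    simpa [htgt] using G.e_comp (g - G.e (G.src f))
  -- split `f ∘ g` as `(f + 0) ∘ (e (δ₀ f) + (g - e (δ₀ f)))`
  have key := G.comp_add f (G.e (G.src f)) 0 (g - G.e (G.src f))
    (by rw [G.tgt_e]) (by rw [map_zero, htgt])
  rw [add_zero, add_sub_cancel] at key
  rw [key, G.comp_e, hzero]
  abel

def kerProj : G.C₁ →+ G.tgt.ker :=
  AddMonoidHom.codRestrict (AddMonoidHom.id G.C₁ - G.e.comp G.tgt) _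
    (fun f => by simp [AddMonoidHom.mem_ker, G.tgt_e])

@[simp] theorem coe_kerProj (f : G.C₁) : (G.kerProj f : G.C₁) = f - G.e (G.tgt f) := rfl

theorem kerProj_add_e_tgt (f : G.C₁) : (G.kerProj f : G.C₁) + G.e (G.tgt f) = f := by
  simp

theorem kerProj_e (x : G.C₀) : G.kerProj (G.e x) = 0 :=
  Subtype.ext (by simp [G.tgt_e])

theorem kerProj_coe (a : G.tgt.ker) : G.kerProj a = a :=
  Subtype.ext (by simp [AddMonoidHom.mem_ker.mp a.2])

end AbGpdObj

/-- Preservation of composition is automatic, by `AbGpdObj.comp_eq`. -/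
def AbGpdHom.mk' {G H : AbGpdObj} (f₀ : G.C₀ →+ H.C₀) (f₁ : G.C₁ →+ H.C₁)
    (comm_src : ∀ a, H.src (f₁ a) = f₀ (G.src a)) (comm_tgt : ∀ a, H.tgt (f₁ a) = f₀ (G.tgt a))
    (comm_e : ∀ x, f₁ (G.e x) = H.e (f₀ x)) : G ⟶ H where
  f₀ := f₀
  f₁ := f₁
  comm_src := comm_src
  comm_tgt := comm_tgt
  comm_e := comm_e
  comm_comp f g h := by
    have hH : H.src (f₁ f) = H.tgt (f₁ g) := by rw [comm_src, comm_tgt, h]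
    rw [G.comp_eq f g h, H.comp_eq _ _ hH, map_sub, map_add, comm_e, comm_src]

theorem Moore.map_f₁_apply {G H : AbGpdObj} (φ : G ⟶ H) (a : G.tgt.ker) :
    H.tgt.ker.subtype ((Moore.map φ).f₁ a) = φ.f₁ a := rfl

theorem Moore.map_injective {G H : AbGpdObj} {φ ψ : G ⟶ H}
    (h : Moore.map φ = Moore.map ψ) : φ = ψ := by
  have h₀ : φ.f₀ = ψ.f₀ := congrArg Ch01Hom.f₀ h
  have hker (a : G.tgt.ker) : φ.f₁ a = ψ.f₁ a := by
    rw [← Moore.map_f₁_apply, ← Moore.map_f₁_apply, h]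
  refine AbGpdHom.ext h₀ (AddMonoidHom.ext fun f => ?_)
  rw [← G.kerProj_add_e_tgt f, map_add, map_add, hker, φ.comm_e, ψ.comm_e, h₀]

namespace Moore

variable {G H : AbGpdObj} (φ : Moore.obj G ⟶ Moore.obj H)

/-! The components of `φ`, retyped along the definition of `Moore.obj` so that `map_add` and
friends find the group structures of `G` and `H`. -/

def hom₀ : G.C₀ →+ H.C₀ := φ.f₀

def hom₁ : G.tgt.ker →+ H.C₁ := H.tgt.ker.subtype.comp φ.f₁

theorem tgt_hom₁ (a : G.tgt.ker) : H.tgt (hom₁ φ a) = 0 := (φ.f₁ a).2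

theorem src_hom₁ (a : G.tgt.ker) : H.src (hom₁ φ a) = hom₀ φ (G.src a) := φ.comm a

def lift : G ⟶ H :=
  AbGpdHom.mk' (hom₀ φ) ((hom₁ φ).comp G.kerProj + H.e.comp ((hom₀ φ).comp G.tgt))
    (fun f => by
      simp only [AddMonoidHom.add_apply, AddMonoidHom.comp_apply, map_add, src_hom₁, H.src_e,
        AbGpdObj.coe_kerProj, map_sub, G.src_e, sub_add_cancel])
    (fun f => by simp [tgt_hom₁, H.tgt_e])
    (fun x => by simp [G.kerProj_e, G.tgt_e])

theorem map_lift : Moore.map (lift φ) = φ := by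
  refine Ch01Hom.ext rfl (AddMonoidHom.ext fun (a : G.tgt.ker) => Subtype.ext ?_)
  change hom₁ φ (G.kerProj a) + H.e (hom₀ φ (G.tgt a)) = hom₁ φ a
  rw [G.kerProj_coe, AddMonoidHom.mem_ker.mp a.2, map_zero, map_zero, add_zero]

end Moore

namespace Ch01

variable (C : Ch01)

def toAbGpdObj : AbGpdObj where
  C₀ := C.F₀
  C₁ := C.F₁ × C.F₀
  src := AddMonoidHom.snd _ _ + C.d.comp (AddMonoidHom.fst _ _)
  tgt := AddMonoidHom.snd _ _
  e := AddMonoidHom.inr _ _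
  comp p q := (p.1 + q.1, p.2)
  inv p := (-p.1, p.2 + C.d p.1)
  src_e _ := by simp
  tgt_e _ := rfl
  src_comp p q h := by
    change p.2 + C.d p.1 = q.2 at h
    change p.2 + C.d (p.1 + q.1) = q.2 + C.d q.1
    rw [map_add, ← add_assoc, h]
  tgt_comp _ _ _ := rfl
  comp_assoc _ _ _ _ _ := by simp [add_assoc]
  comp_e _ := by simp
  e_comp _ := by simp
  src_inv _ := by simp
  tgt_inv _ := by simp
  comp_inv _ := by simp
  inv_comp _ := by simp
  comp_add _ _ _ _ _ _ := Prod.ext (add_add_add_comm _ _ _ _) rfl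

theorem snd_eq_zero_of_mem_ker (p : C.toAbGpdObj.tgt.ker) : p.1.2 = 0 := p.2

def mooreToAbGpdObjIso : Moore.obj C.toAbGpdObj ≅ C where
  hom :=
    { f₀ := AddMonoidHom.id _
      f₁ := (AddMonoidHom.fst _ _).comp C.toAbGpdObj.tgt.ker.subtype
      comm := fun (p : C.toAbGpdObj.tgt.ker) => by
        change C.d p.1.1 = p.1.2 + C.d p.1.1
        rw [C.snd_eq_zero_of_mem_ker p, zero_add] }
  inv :=
    { f₀ := AddMonoidHom.id _
      f₁ := AddMonoidHom.codRestrict (AddMonoidHom.inl _ _) _ fun _ => rfl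
      comm := fun a => zero_add (C.d a) }
  hom_inv_id := Ch01Hom.ext rfl <| AddMonoidHom.ext fun (p : C.toAbGpdObj.tgt.ker) =>
    Subtype.ext <| Prod.ext rfl (C.snd_eq_zero_of_mem_ker p).symm
  inv_hom_id := rfl

end Ch01

/-- The category of abelian group objects in the category of
small groupoids is equivalent to the category of chain complexes of abelian
groups concentrated in degrees 0 and 1, via the Moore complex functor
`G ↦ (ker δ₁ → G₀, δ₀)`. -/
theorem stmt0 : Moore.IsEquivalence where
  faithful := ⟨Moore.map_injective⟩
  full := ⟨fun φ => ⟨Moore.lift φ, Moore.map_lift φ⟩⟩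
  essSurj := ⟨fun C => ⟨C.toAbGpdObj, ⟨C.mooreToAbGpdObjIso⟩⟩⟩
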